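/- Let n ≥ 3 and let B_{2n} : V_{2n−1} → GF(2) be defined by B_{2n}(y) = M_{2n}(1,y), where (1,y) denotes prepending the bit 1 to y. Then N(B_{2n}) = 2·(∑_{j=n+1}^{2n−2} C(2n−2,j)) + C(2n−2,n), where C(m,k) denotes the binomial coefficient. -/

import Mathlib

open Finset

/-- Hamming weight of a vector in `V_N = (Fin N → ZMod 2)`. -/
def wtV {N : ℕ} (x : Fin N → ZMod 2) : ℕ :=
  (Finset.univ.filter (fun i => x i = 1)).card

/-- Hamming weight of a Boolean function `f : V_N → GF(2)`. -/
def wtF {N : ℕ} (f : (Fin N → ZMod 2) → ZMod 2) : ℕ :=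
  (Finset.univ.filter (fun x => f x = 1)).card

/-- `a` is affine: `a x = w · x + b` for some `w ∈ V_N`, `b ∈ GF(2)`. -/
def IsAffine {N : ℕ} (a : (Fin N → ZMod 2) → ZMod 2) : Prop :=
  ∃ w : Fin N → ZMod 2, ∃ b : ZMod 2, ∀ x, a x = (∑ i, w i * x i) + b

/-- Hamming distance `d(f,g) = wt(f + g)`. -/
def hdist {N : ℕ} (f g : (Fin N → ZMod 2) → ZMod 2) : ℕ :=
  wtF (fun x => f x + g x)

/-- Nonlinearity: minimum distance to affine functions. -/
noncomputable def nlin {N : ℕ} (f : (Fin N → ZMod 2) → ZMod 2) : ℕ :=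
  sInf {d : ℕ | ∃ a, IsAffine a ∧ d = hdist f a}

/-- Threshold (majority-type) function: `maj N t x = 1` iff `wt(x) ≥ t`.
So `M_{2n+1} = maj (2n+1) (n+1)` and `M_{2n} = maj (2n) n`. -/
def maj (N t : ℕ) (x : Fin N → ZMod 2) : ZMod 2 :=
  if t ≤ wtV x then 1 else 0

/-!
Prepending a `1` shifts the weight by one, so `B_{2n}` is the threshold function
`[wt y ≥ n - 1]` in `2n - 1` variables. For a threshold `t` with `2t ≤ N`, the constant `1` is
at distance `#{wt < t} = ∑_{j<t} C(N,j)`, and no affine `a = w·x + b` is closer: some set `T` of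
at least `N - 1` coordinates has `∑_{i∈T} w_i = 0`, so adding the indicator of `T` preserves `a`
and maps the inputs of weight `< t` injectively to inputs of weight `≥ t` with the same value
of `a`. Pascal's rule and the symmetry of binomial coefficients put `∑_{j<n-1} C(2n-1,j)` in the
stated form.
-/

lemma ZMod.two_eq_zero_or_one (a : ZMod 2) : a = 0 ∨ a = 1 := by
  revert a; decide

lemma ZMod.two_add_eq_one_iff_ne (a b : ZMod 2) : a + b = 1 ↔ a ≠ b := by
  revert a b; decide

section BooleanFunctions

variable {N : ℕ}

def indicatorVec (T : Finset (Fin N)) : Fin N → ZMod 2 := fun i => if i ∈ T then 1 else 0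

lemma card_wtV_eq (j : ℕ) : #{x : Fin N → ZMod 2 | wtV x = j} = N.choose j := by
  suffices #{x : Fin N → ZMod 2 | wtV x = j} = #(powersetCard j (univ : Finset (Fin N))) by
    simpa using this
  refine card_nbij' (fun x => ({i | x i = 1} : Finset (Fin N))) indicatorVec ?_ ?_ ?_ ?_
  · intro x hx
    simp only [mem_coe, mem_filter, mem_univ, true_and, mem_powersetCard_univ] at hx ⊢
    exact hx
  · intro s hs
    simp only [mem_coe, mem_filter, mem_univ, true_and, mem_powersetCard_univ] at hs ⊢
    simpa [wtV, indicatorVec] using hs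
  · intro x _
    funext i
    rcases ZMod.two_eq_zero_or_one (x i) with h | h <;> simp [indicatorVec, h]
  · intro s _
    ext i
    by_cases h : i ∈ s <;> simp [indicatorVec, h]

lemma card_wtV_lt (k : ℕ) :
    #{x : Fin N → ZMod 2 | wtV x < k} = ∑ j ∈ range k, N.choose j := by
  rw [card_eq_sum_card_fiberwise (f := wtV) (t := range k) (fun x hx => by simpa using hx)]
  refine sum_congr rfl fun j hj => ?_
  rw [← card_wtV_eq, filter_filter]
  congr 1
  ext x
  simp only [mem_filter, mem_univ, true_and, mem_range] at hj ⊢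
  exact ⟨And.right, fun h => ⟨h ▸ hj, h⟩⟩

lemma wtV_comp_cast {M : ℕ} (h : N = M) (x : Fin M → ZMod 2) :
    wtV (fun i => x (Fin.cast h i)) = wtV x := by
  subst h; rfl

lemma wtV_cons_one (y : Fin N → ZMod 2) :
    wtV (Fin.cons 1 y : Fin (N + 1) → ZMod 2) = wtV y + 1 := by
  simp only [wtV, card_filter, Fin.sum_univ_succ, Fin.cons_zero, Fin.cons_succ]
  simp [add_comm]

lemma card_le_wtV_add_wtV_add_indicatorVec (x : Fin N → ZMod 2) (T : Finset (Fin N)) :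
    #T ≤ wtV x + wtV (x + indicatorVec T) :=
  calc #T ≤ #(univ.filter (x · = 1) ∪ univ.filter ((x + indicatorVec T) · = 1)) :=
        card_le_card fun i hi => by
          simp only [mem_union, mem_filter, mem_univ, true_and]
          rcases ZMod.two_eq_zero_or_one (x i) with h | h <;> simp [indicatorVec, hi, h]
    _ ≤ wtV x + wtV (x + indicatorVec T) := card_union_le _ _

lemma sum_mul_add_indicatorVec (w x : Fin N → ZMod 2) (T : Finset (Fin N)) :
    ∑ i, w i * (x + indicatorVec T) i = ∑ i, w i * x i + ∑ i ∈ T, w i := by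
  simp [indicatorVec, mul_add, sum_add_distrib, sum_ite_mem]

lemma exists_card_add_one_ge_sum_eq_zero (w : Fin N → ZMod 2) :
    ∃ T : Finset (Fin N), N ≤ #T + 1 ∧ ∑ i ∈ T, w i = 0 := by
  by_cases h : ∑ i, w i = 0
  · exact ⟨univ, by simp, h⟩
  obtain ⟨i, -, hi⟩ := exists_ne_zero_of_sum_ne_zero h
  refine ⟨univ.erase i, ?_, ?_⟩
  · simp only [card_erase_of_mem (mem_univ i), card_univ, Fintype.card_fin]
    omega
  rw [sum_erase_eq_sub (mem_univ i), (ZMod.two_eq_zero_or_one _).resolve_left h,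
    (ZMod.two_eq_zero_or_one _).resolve_left hi, sub_self]

lemma IsAffine.exists_invariant_add_indicatorVec {a : (Fin N → ZMod 2) → ZMod 2}
    (ha : IsAffine a) :
    ∃ T : Finset (Fin N), N ≤ #T + 1 ∧ ∀ x, a (x + indicatorVec T) = a x := by
  obtain ⟨w, b, ha⟩ := ha
  obtain ⟨T, hT, hwT⟩ := exists_card_add_one_ge_sum_eq_zero w
  exact ⟨T, hT, fun x => by rw [ha, ha, sum_mul_add_indicatorVec, hwT, add_zero]⟩

lemma card_wtV_lt_le_card_le_wtV {t : ℕ} {T : Finset (Fin N)} (hT : 2 * t ≤ #T + 1)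
    {a : (Fin N → ZMod 2) → ZMod 2} (ha : ∀ x, a (x + indicatorVec T) = a x) (c : ZMod 2) :
    #{x | wtV x < t ∧ a x = c} ≤ #{x | t ≤ wtV x ∧ a x = c} := by
  refine card_le_card_of_injOn (· + indicatorVec T) (fun x hx => ?_) (add_left_injective _).injOn
  simp only [coe_filter, mem_univ, true_and, Set.mem_ofPred_eq] at hx ⊢
  have := card_le_wtV_add_wtV_add_indicatorVec x T
  exact ⟨by omega, (ha x).trans hx.2⟩

lemma hdist_eq_card_ne (f g : (Fin N → ZMod 2) → ZMod 2) : hdist f g = #{x | f x ≠ g x} := by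
  simp only [hdist, wtF, ZMod.two_add_eq_one_iff_ne]

lemma card_wtV_lt_le_hdist_maj {t : ℕ} {T : Finset (Fin N)} (hT : 2 * t ≤ #T + 1)
    {a : (Fin N → ZMod 2) → ZMod 2} (ha : ∀ x, a (x + indicatorVec T) = a x) :
    #{x : Fin N → ZMod 2 | wtV x < t} ≤ hdist (maj N t) a :=
  calc #{x | wtV x < t} = #{x | wtV x < t ∧ a x = 0} + #{x | wtV x < t ∧ a x = 1} := by
        rw [← card_union_of_disjoint
          (disjoint_filter.2 fun x _ h₀ h₁ => zero_ne_one (h₀.2.symm.trans h₁.2))]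
        congr 1
        ext x
        rcases ZMod.two_eq_zero_or_one (a x) with h | h <;> simp [h]
    _ ≤ #{x | t ≤ wtV x ∧ a x = 0} + #{x | wtV x < t ∧ a x = 1} := by
        gcongr ?_ + _
        exact card_wtV_lt_le_card_le_wtV hT ha 0
    _ = hdist (maj N t) a := by
        rw [hdist_eq_card_ne,
          ← card_union_of_disjoint (disjoint_filter.2 fun x _ h₀ h₁ => by omega)]
        congr 1
        ext x
        simp only [mem_union, mem_filter, mem_univ, true_and]
        by_cases ht : t ≤ wtV x <;> rcases ZMod.two_eq_zero_or_one (a x) with h | h <;>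
          simp_all [maj]

lemma nlin_eq_of_isAffine {f a₀ : (Fin N → ZMod 2) → ZMod 2} {d : ℕ}
    (ha₀ : IsAffine a₀) (hd : hdist f a₀ = d) (h : ∀ a, IsAffine a → d ≤ hdist f a) :
    nlin f = d :=
  le_antisymm (Nat.sInf_le ⟨a₀, ha₀, hd.symm⟩)
    (le_csInf ⟨d, a₀, ha₀, hd.symm⟩ (by rintro _ ⟨a, ha, rfl⟩; exact h a ha))

lemma isAffine_const_one : IsAffine (fun _ : Fin N → ZMod 2 => 1) := ⟨0, 1, by simp⟩

lemma hdist_maj_const_one (t : ℕ) :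
    hdist (maj N t) (fun _ => 1) = #{x : Fin N → ZMod 2 | wtV x < t} := by
  rw [hdist_eq_card_ne]
  congr 1
  ext x
  simp [maj]

theorem nlin_maj {t : ℕ} (h : 2 * t ≤ N) : nlin (maj N t) = ∑ j ∈ range t, N.choose j := by
  rw [← card_wtV_lt]
  refine nlin_eq_of_isAffine isAffine_const_one (hdist_maj_const_one t) fun a ha => ?_
  obtain ⟨T, hT, haT⟩ := ha.exists_invariant_add_indicatorVec
  exact card_wtV_lt_le_hdist_maj (by omega) haT

end BooleanFunctions

lemma sum_range_succ_choose_succ (M k : ℕ) :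
    ∑ j ∈ range (k + 1), (M + 1).choose j
      = ∑ j ∈ range (k + 1), M.choose j + ∑ j ∈ range k, M.choose j := by
  rw [sum_range_succ' _ k, sum_range_succ' (M.choose ·) k]
  simp only [Nat.choose_succ_succ', sum_add_distrib, Nat.choose_zero_right]
  ring

lemma sum_Icc_choose_eq_sum_range (M a : ℕ) :
    ∑ j ∈ Icc a M, M.choose j = ∑ j ∈ range (M + 1 - a), M.choose j := by
  refine sum_nbij' (M - ·) (M - ·) ?_ ?_ ?_ ?_ fun j hj => (Nat.choose_symm (mem_Icc.1 hj).2).symm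
  all_goals intro j hj; simp only [mem_Icc, mem_range] at hj ⊢; omega

lemma sum_range_choose_two_mul_sub_one {n : ℕ} (hn : 2 ≤ n) :
    ∑ j ∈ range (n - 1), (2 * n - 1).choose j
      = 2 * ∑ j ∈ Icc (n + 1) (2 * n - 2), (2 * n - 2).choose j + (2 * n - 2).choose n := by
  obtain ⟨k, rfl⟩ : ∃ k, n = k + 2 := ⟨n - 2, by omega⟩
  have hsymm : (2 * k + 2).choose k = (2 * k + 2).choose (k + 2) := by
    rw [← Nat.choose_symm (by omega : k + 2 ≤ 2 * k + 2)]; congr 1; omega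
  rw [show k + 2 - 1 = k + 1 by omega, show 2 * (k + 2) - 1 = (2 * k + 2) + 1 by omega,
    show 2 * (k + 2) - 2 = 2 * k + 2 by omega, sum_range_succ_choose_succ, sum_range_succ,
    sum_Icc_choose_eq_sum_range, show 2 * k + 2 + 1 - (k + 2 + 1) = k by omega, hsymm]
  ring

/-- `N(B(2n)) = 2·∑_{j=n+1}^{2n-2} C(2n-2,j) + C(2n-2,n)` where `B_{2n}(y) = M_{2n}(1,y)`. -/
theorem nonlinearity_right_half_majority_even (n : ℕ) (hn : 3 ≤ n)
    (B : (Fin (2 * n - 1) → ZMod 2) → ZMod 2)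
    (hB : ∀ y, B y = maj (2 * n) n
      (fun i => (Fin.cons (1 : ZMod 2) y : Fin (2 * n - 1 + 1) → ZMod 2)
        (Fin.cast (by omega : 2 * n = 2 * n - 1 + 1) i))) :
    nlin B = 2 * (∑ j ∈ Finset.Icc (n + 1) (2 * n - 2), Nat.choose (2 * n - 2) j)
              + Nat.choose (2 * n - 2) n := by
  have hB_maj : B = maj (2 * n - 1) (n - 1) := by
    funext y
    rw [hB, maj, maj, wtV_comp_cast, wtV_cons_one]
    simp only [show n ≤ wtV y + 1 ↔ n - 1 ≤ wtV y by omega]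
  rw [hB_maj, nlin_maj (by omega), sum_range_choose_two_mul_sub_one (by omega)]
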